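/- arXiv:2102.00030 — 5 statements merged into one kernel-verified Lean document; each statement's English description precedes it below -/
import Mathlib

section
/- Let (Ω, ℱ, P) be a probability space with a filtration (ℱ_t)_{t∈ℕ}, and let (x_t), (w_t), (η_t) be sequences of real-valued random variables such that x_t, η_t, and w_{t-1} are ℱ_{t-1}-measurable for every t, and x_{t+1} = (1 - η_t) x_t + η_t w_t for all t. Assume: (1) there exist finite constants A, B such that E[w_t² | ℱ_{t-1}] ≤ A |x_t|² + B almost surely for all t; (2) E[w_t | ℱ_{t-1}] = 0 almost surely for all t; (3) η_t ∈ [0,1] for all t; (4) ∑_{t=0}^∞ η_t = ∞ almost surely; (5) ∑_{t=0}^∞ η_t² < ∞ almost surely. Then x_t converges to 0 almost surely. -/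
/-!
Squaring the recursion gives the almost-supermartingale inequality
`E[x_{t+1}² | ℱ_t] ≤ (1 + A η_t²) x_t² + B η_t² - η_t x_t²`. By the Robbins–Siegmund theorem,
`x_t²` then converges and `∑ η_t x_t² < ∞` almost surely wherever `∑ η_t² < ∞`; as `∑ η_t = ∞`,
the limit must be `0`. Robbins–Siegmund itself comes from martingale convergence:
`V_n / ∏_{k<n} (1 + a_k) + ∑_{k<n} (c_k - b_k) / ∏_{j≤k} (1 + a_j)` is a supermartingale bounded
below by `-∑_{k<n} b_k`, so it converges once it is stopped before `∑ b_k` reaches a level `K`.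
The iterates need not be integrable; restricting everything to the `ℱ_0`-measurable event where
the first iterate is at most `M` in absolute value makes them square-integrable without changing
the hypotheses.
-/

open MeasureTheory Filter Topology Finset

theorem Finset.one_le_prod_one_add {ι : Type*} {a : ι → ℝ} (ha : ∀ i, 0 ≤ a i) (s : Finset ι) :
    1 ≤ ∏ i ∈ s, (1 + a i) :=
  one_le_prod fun i _ => le_add_of_nonneg_right (ha i)

theorem tendsto_and_summable_of_tendsto_div_prod_add_sum {V a b c : ℕ → ℝ}
    (hV : ∀ n, 0 ≤ V n) (ha : ∀ n, 0 ≤ a n) (hc : ∀ n, 0 ≤ c n)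
    (ha_sum : Summable a) (hb_sum : Summable b)
    (hR : ∃ r, Tendsto (fun n => V n / ∏ k ∈ range n, (1 + a k) +
      ∑ k ∈ range n, (c k - b k) / ∏ j ∈ range (k + 1), (1 + a j)) atTop (𝓝 r)) :
    (∃ L, Tendsto V atTop (𝓝 L)) ∧ Summable c := by
  set p : ℕ → ℝ := fun n => ∏ k ∈ range n, (1 + a k) with hp_def
  obtain ⟨r, hr⟩ := hR
  have hp1 : ∀ n, 1 ≤ p n := fun n => one_le_prod_one_add ha _
  have hp_pos : ∀ n, 0 < p n := fun n => one_pos.trans_le (hp1 n)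
  have hp_mono : Monotone p := monotone_nat_of_le_succ fun n => by
    simp only [hp_def, prod_range_succ]
    nlinarith [hp1 n, ha n]
  have hp_tend : Tendsto p atTop (𝓝 (∏' k, (1 + a k))) :=
    (Real.multipliable_one_add_of_summable ha_sum).tendsto_prod_tprod_nat
  have hb' : Summable fun k => b k / p (k + 1) := by
    refine hb_sum.norm.of_norm_bounded fun k => ?_
    rw [norm_div, Real.norm_of_nonneg (hp_pos _).le]
    exact div_le_self (norm_nonneg _) (hp1 _)
  have hc'_nonneg : ∀ k, 0 ≤ c k / p (k + 1) := fun k => div_nonneg (hc k) (hp_pos _).le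
  have hsum_tend : Tendsto (fun n => V n / p n + ∑ k ∈ range n, c k / p (k + 1)) atTop
      (𝓝 (r + ∑' k, b k / p (k + 1))) := by
    refine (hr.add hb'.hasSum.tendsto_sum_nat).congr fun n => ?_
    simp only [sub_div, sum_sub_distrib]
    ring
  have hc' : Summable fun k => c k / p (k + 1) := by
    obtain ⟨C, hC⟩ := hsum_tend.bddAbove_range
    refine summable_of_sum_range_le (c := C) hc'_nonneg fun n => ?_
    have := hC (Set.mem_range_self n)
    have := div_nonneg (hV n) (hp_pos n).le
    linarith
  refine ⟨⟨_, ((hsum_tend.sub hc'.hasSum.tendsto_sum_nat).mul hp_tend).congr fun n => ?_⟩, ?_⟩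
  · field_simp [(hp_pos n).ne']
    ring
  · refine hc'.mul_left (∏' k, (1 + a k)) |>.of_nonneg_of_le hc fun k => ?_
    rw [mul_div_assoc', le_div_iff₀ (hp_pos _), mul_comm]
    exact mul_le_mul_of_nonneg_right (hp_mono.ge_of_tendsto hp_tend _) (hc k)

theorem eq_zero_of_tendsto_of_summable_mul {V β : ℕ → ℝ} {L : ℝ} (hV : Tendsto V atTop (𝓝 L))
    (hV_nonneg : ∀ n, 0 ≤ V n) (hβ : ∀ n, 0 ≤ β n) (hβV : Summable fun n => β n * V n)
    (hβ_div : ¬ Summable β) : L = 0 := by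
  refine (ge_of_tendsto' hV hV_nonneg).eq_or_lt.elim Eq.symm fun hL => absurd ?_ hβ_div
  refine (hβV.mul_left (2 / L)).of_norm_bounded_eventually ?_
  rw [Nat.cofinite_eq_atTop]
  filter_upwards [hV.eventually (le_mem_nhds (half_lt_self hL))] with n hn
  rw [Real.norm_of_nonneg (hβ n), div_mul_eq_mul_div, le_div_iff₀ hL]
  nlinarith [hβ n]

namespace MeasureTheory

variable {Ω : Type*} {m0 : MeasurableSpace Ω} {μ : Measure Ω}

theorem Integrable.div_of_one_le {f g : Ω → ℝ} (hf : Integrable f μ) (hg : AEMeasurable g μ)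
    (hg1 : ∀ ω, 1 ≤ g ω) : Integrable (fun ω => f ω / g ω) μ := by
  refine (hf.bdd_mul hg.inv.aestronglyMeasurable (c := 1) (ae_of_all _ fun ω => ?_)).congr
    (ae_of_all _ fun ω => (div_eq_inv_mul _ _).symm)
  rw [Pi.inv_apply, norm_inv, Real.norm_of_nonneg (zero_le_one.trans (hg1 ω))]
  exact inv_le_one_of_one_le₀ (hg1 ω)

theorem MemLp.convexComb {p : ENNReal} {y u β : Ω → ℝ} (hy : MemLp y p μ) (hu : MemLp u p μ)
    (hβ : AEStronglyMeasurable β μ) (hβ01 : ∀ ω, β ω ∈ Set.Icc (0 : ℝ) 1) :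
    MemLp (fun ω => (1 - β ω) * y ω + β ω * u ω) p μ := by
  refine (hy.of_le_mul (f := fun ω => (1 - β ω) * y ω) (c := 1)
    ((aestronglyMeasurable_const.sub hβ).mul hy.1)
    (ae_of_all _ fun ω => ?_)).add (hu.of_le_mul (c := 1) (hβ.mul hu.1) (ae_of_all _ fun ω => ?_))
  all_goals
    obtain ⟨h0, h1⟩ := hβ01 ω
    simp only [norm_mul, one_mul, Real.norm_eq_abs]
    exact mul_le_of_le_one_left (abs_nonneg _) (abs_le.2 ⟨by linarith, by linarith⟩)

variable [IsFiniteMeasure μ]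

theorem condExp_sq_convexComb_le {m : MeasurableSpace Ω} (hm : m ≤ m0) {y u β g : Ω → ℝ}
    (hy : StronglyMeasurable[m] y) (hβ : StronglyMeasurable[m] β)
    (hβ01 : ∀ ω, β ω ∈ Set.Icc (0 : ℝ) 1) (hy2 : MemLp y 2 μ) (hu2 : MemLp u 2 μ)
    (hu : μ[u | m] =ᵐ[μ] 0) (hu_sq : μ[fun ω => u ω ^ 2 | m] ≤ᵐ[μ] g) :
    μ[fun ω => ((1 - β ω) * y ω + β ω * u ω) ^ 2 | m] ≤ᵐ[μ]
      fun ω => (1 - β ω) * y ω ^ 2 + β ω ^ 2 * g ω := by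
  set f₁ : Ω → ℝ := fun ω => (1 - β ω) ^ 2 * y ω ^ 2
  set f₂ : Ω → ℝ := (fun ω => 2 * (1 - β ω) * β ω * y ω) * u
  set f₃ : Ω → ℝ := (fun ω => β ω ^ 2) * fun ω => u ω ^ 2
  have hexpand : (fun ω => ((1 - β ω) * y ω + β ω * u ω) ^ 2) = f₁ + f₂ + f₃ := by
    ext ω
    simp only [f₁, f₂, f₃, Pi.add_apply, Pi.mul_apply]
    ring
  have hβ' := hβ.mono hm
  have hf₁_meas : StronglyMeasurable[m] f₁ :=
    ((stronglyMeasurable_const.sub hβ).pow 2).mul (hy.pow 2)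
  have hf₁ : Integrable f₁ μ := hy2.integrable_sq.bdd_mul (c := 1)
    ((stronglyMeasurable_const.sub hβ').pow 2).aestronglyMeasurable (ae_of_all _ fun ω => by
      obtain ⟨h0, h1⟩ := hβ01 ω
      rw [Real.norm_of_nonneg (sq_nonneg _)]
      exact pow_le_one₀ (by linarith) (by linarith))
  have hf₂ : Integrable f₂ μ := by
    have hcoef : Measurable[m] fun ω => 2 * (1 - β ω) * β ω := by
      have := hβ.measurable
      fun_prop
    refine ((hy2.integrable_mul hu2).bdd_mul (c := 2)
      (hcoef.mono hm le_rfl).aestronglyMeasurable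
      (ae_of_all _ fun ω => ?_)).congr (ae_of_all _ fun ω => ?_)
    · obtain ⟨h0, h1⟩ := hβ01 ω
      rw [Real.norm_of_nonneg (by positivity)]
      nlinarith
    · simp only [f₂, Pi.mul_apply]
      ring
  have hf₃ : Integrable f₃ μ := hu2.integrable_sq.bdd_mul (c := 1)
    (hβ'.pow 2).aestronglyMeasurable (ae_of_all _ fun ω => by
      rw [Real.norm_of_nonneg (sq_nonneg _)]
      exact pow_le_one₀ (hβ01 ω).1 (hβ01 ω).2)
  rw [hexpand]
  have h₂ : μ[f₂ | m] =ᵐ[μ] (fun ω => 2 * (1 - β ω) * β ω * y ω) * μ[u | m] :=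
    condExp_mul_of_stronglyMeasurable_left
      (((stronglyMeasurable_const.mul (stronglyMeasurable_const.sub hβ)).mul hβ).mul hy) hf₂
      (hu2.integrable one_le_two)
  have h₃ : μ[f₃ | m] =ᵐ[μ] (fun ω => β ω ^ 2) * μ[fun ω => u ω ^ 2 | m] :=
    condExp_mul_of_stronglyMeasurable_left (hβ.pow 2) hf₃ hu2.integrable_sq
  filter_upwards [condExp_add (hf₁.add hf₂) hf₃ m, condExp_add hf₁ hf₂ m, h₂, h₃, hu, hu_sq]
    with ω h₁₂₃ h₁₂ h₂ h₃ hu_ω hu_sq_ω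
  rw [h₁₂₃, Pi.add_apply, h₁₂, Pi.add_apply, h₂, h₃, condExp_of_stronglyMeasurable hm hf₁_meas hf₁]
  simp only [Pi.mul_apply, hu_ω, Pi.zero_apply, mul_zero, add_zero, f₁]
  obtain ⟨h0, h1⟩ := hβ01 ω
  have : (1 - β ω) ^ 2 * y ω ^ 2 ≤ (1 - β ω) * y ω ^ 2 := by
    nlinarith [mul_nonneg (mul_nonneg (sub_nonneg.2 h1) h0) (sq_nonneg (y ω))]
  nlinarith [sq_nonneg (β ω)]

variable {ℱ : Filtration ℕ m0} {f : ℕ → Ω → ℝ}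

protected theorem Supermartingale.stoppedProcess (hf : Supermartingale f ℱ μ) {τ : Ω → ℕ∞}
    (hτ : IsStoppingTime ℱ τ) : Supermartingale (stoppedProcess f τ) ℱ μ := by
  have h : stoppedProcess f τ = -(stoppedProcess (-f) τ) := by
    ext n ω
    simp [stoppedProcess]
  exact h ▸ (hf.neg.stoppedProcess hτ).neg

theorem Supermartingale.exists_ae_tendsto_of_forall_ge (hf : Supermartingale f ℱ μ) {C : ℝ}
    (hC : ∀ n ω, C ≤ f n ω) : ∀ᵐ ω ∂μ, ∃ c, Tendsto (fun n => f n ω) atTop (𝓝 c) := by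
  have hbdd : ∀ n, eLpNorm ((-f) n) 1 μ ≤
      (∫ ω, f 0 ω ∂μ + μ.real Set.univ * (2 * |C|)).toNNReal := by
    intro n
    have hint := hf.integrable n
    rw [eLpNorm_one_eq_lintegral_enorm,
      ← ofReal_integral_norm_eq_lintegral_enorm (hf.neg.integrable n)]
    refine ENNReal.ofReal_le_ofReal ?_
    calc ∫ ω, ‖(-f) n ω‖ ∂μ ≤ ∫ ω, (f n ω + 2 * |C|) ∂μ := by
          refine integral_mono hint.neg.norm (hint.add (integrable_const _)) fun ω => ?_
          have := hC n ω
          simp only [Pi.neg_apply, norm_neg, Real.norm_eq_abs]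
          cases abs_cases (f n ω) <;> cases abs_cases C <;> linarith
      _ = ∫ ω, f n ω ∂μ + μ.real Set.univ * (2 * |C|) := by
          rw [integral_add hint (integrable_const _), integral_const, smul_eq_mul]
      _ ≤ ∫ ω, f 0 ω ∂μ + μ.real Set.univ * (2 * |C|) := by
          have := hf.setIntegral_le n.zero_le MeasurableSet.univ
          simp only [Measure.restrict_univ] at this
          linarith
  filter_upwards [hf.neg.exists_ae_tendsto_of_bdd hbdd] with ω ⟨c, hc⟩
  exact ⟨-c, by simpa using hc.neg⟩

theorem Supermartingale.ae_exists_tendsto_of_summable (hf : Supermartingale f ℱ μ)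
    {b : ℕ → Ω → ℝ} (hb : StronglyAdapted ℱ b) (hb_nonneg : ∀ n ω, 0 ≤ b n ω)
    (hfb : ∀ n ω, -∑ k ∈ range n, b k ω ≤ f n ω) :
    ∀ᵐ ω ∂μ, Summable (fun n => b n ω) → ∃ c, Tendsto (fun n => f n ω) atTop (𝓝 c) := by
  set S : ℕ → Ω → ℝ := fun n ω => ∑ k ∈ range (n + 1), b k ω
  have hS : StronglyAdapted ℱ S := fun n =>
    Finset.stronglyMeasurable_fun_sum _ fun k hk =>
      (hb k).mono (ℱ.mono (Nat.lt_succ_iff.1 (mem_range.1 hk)))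
  have hf_ge : ∀ (K : ℕ) (m : ℕ) ω, (m : ℕ∞) ≤ leastGE S K ω → -(K : ℝ) ≤ f m ω := by
    rintro K (_ | k) ω hk
    · have := hfb 0 ω
      rw [range_zero, sum_empty, neg_zero] at this
      linarith [(K.cast_nonneg : (0 : ℝ) ≤ K)]
    · have hlt : S k ω < K := by
        simpa using notMem_of_lt_hittingAfter
          ((ENat.add_one_le_iff (ENat.natCast_ne_top k)).1 hk) bot_le
      linarith [hfb (k + 1) ω]
  have hstopped : ∀ K : ℕ, ∀ᵐ ω ∂μ,
      ∃ c, Tendsto (fun n => stoppedProcess f (leastGE S K) n ω) atTop (𝓝 c) := by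
    intro K
    refine (hf.stoppedProcess (hS.isStoppingTime_leastGE (K : ℝ))).exists_ae_tendsto_of_forall_ge
      (C := -K) fun n ω => ?_
    rcases le_total (n : ℕ∞) (leastGE S K ω) with hn | hn
    · rw [stoppedProcess_eq_of_le hn]
      exact hf_ge K n ω hn
    · rw [stoppedProcess_eq_of_ge hn]
      obtain ⟨k, hk⟩ := WithTop.ne_top_iff_exists.1 (ne_top_of_le_ne_top (ENat.natCast_ne_top n) hn)
      rw [← hk]
      exact hf_ge K k ω hk.le
  filter_upwards [ae_all_iff.2 hstopped] with ω hω hsum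
  obtain ⟨K, hK⟩ := exists_nat_gt (∑' n, b n ω)
  have htop : leastGE S K ω = ⊤ := hittingAfter_eq_top_iff.2 fun j _ => by
    simpa [S] using (hsum.sum_le_tsum _ fun n _ => hb_nonneg n ω).trans_lt hK
  simpa [stoppedProcess_eq_of_le, htop] using hω K

theorem supermartingale_div_prod_add_sum {V a b c : ℕ → Ω → ℝ}
    (hV : StronglyAdapted ℱ V) (ha : StronglyAdapted ℱ a) (hb : StronglyAdapted ℱ b)
    (hc : StronglyAdapted ℱ c) (hV_int : ∀ n, Integrable (V n) μ)
    (hb_int : ∀ n, Integrable (b n) μ) (hc_int : ∀ n, Integrable (c n) μ)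
    (ha_nonneg : ∀ n ω, 0 ≤ a n ω)
    (hVabc : ∀ n, μ[V (n + 1) | ℱ n] ≤ᵐ[μ] fun ω => (1 + a n ω) * V n ω + b n ω - c n ω) :
    Supermartingale (fun n ω => V n ω / ∏ k ∈ range n, (1 + a k ω) +
      ∑ k ∈ range n, (c k ω - b k ω) / ∏ j ∈ range (k + 1), (1 + a j ω)) ℱ μ := by
  set p : ℕ → Ω → ℝ := fun n ω => ∏ k ∈ range n, (1 + a k ω)
  set D : ℕ → Ω → ℝ := fun n ω => ∑ k ∈ range n, (c k ω - b k ω) / p (k + 1) ω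
  have hp1 : ∀ n ω, 1 ≤ p n ω := fun n ω => one_le_prod_one_add (ha_nonneg · ω) _
  have hp_meas : ∀ k n, k ≤ n + 1 → StronglyMeasurable[ℱ n] (p k) := fun k n hkn =>
    Finset.stronglyMeasurable_fun_prod _ fun j hj => stronglyMeasurable_const.add
      ((ha j).mono (ℱ.mono (by have := mem_range.1 hj; omega)))
  have hD_meas : ∀ k n, k ≤ n + 1 → StronglyMeasurable[ℱ n] (D k) := fun k n hkn =>
    Finset.stronglyMeasurable_fun_sum _ fun j hj => by
      have hjn : j ≤ n := by have := mem_range.1 hj; omega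
      exact (((hc j).sub (hb j)).mono (ℱ.mono hjn)).div (hp_meas (j + 1) n (by omega))
  have hD_int : ∀ n, Integrable (D n) μ := fun n => integrable_finsetSum _ fun k _ =>
    ((hc_int k).sub (hb_int k)).div_of_one_le
      ((hp_meas (k + 1) k le_rfl).mono (ℱ.le k)).measurable.aemeasurable (hp1 (k + 1))
  have hVp_int : ∀ n, Integrable (fun ω => V n ω / p n ω) μ := fun n =>
    (hV_int n).div_of_one_le ((hp_meas n n (by omega)).mono (ℱ.le n)).measurable.aemeasurable
      (hp1 n)
  refine supermartingale_nat (fun n => ((hV n).div (hp_meas n n (by omega))).add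
    (hD_meas n n (by omega))) (fun n => (hVp_int n).add (hD_int n)) fun n => ?_
  have hVp_int' : Integrable ((fun ω => (p (n + 1) ω)⁻¹) * V (n + 1)) μ := by
    simpa only [div_eq_inv_mul, Pi.mul_def] using hVp_int (n + 1)
  have hpull : μ[(fun ω => (p (n + 1) ω)⁻¹) * V (n + 1) | ℱ n] =ᵐ[μ]
      (fun ω => (p (n + 1) ω)⁻¹) * μ[V (n + 1) | ℱ n] :=
    condExp_mul_of_stronglyMeasurable_left
      (hp_meas (n + 1) n le_rfl).measurable.inv.stronglyMeasurable hVp_int' (hV_int (n + 1))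
  have hsplit : (fun ω => V (n + 1) ω / p (n + 1) ω + D (n + 1) ω) =
      (fun ω => (p (n + 1) ω)⁻¹) * V (n + 1) + D (n + 1) := by
    ext ω
    simp only [Pi.add_apply, Pi.mul_apply, div_eq_inv_mul]
  rw [hsplit]
  filter_upwards [condExp_add hVp_int' (hD_int (n + 1)) (ℱ n), hpull, hVabc n]
    with ω h_add h_pull h_drift
  rw [h_add, Pi.add_apply, h_pull, condExp_of_stronglyMeasurable (ℱ.le n)
    (hD_meas (n + 1) n le_rfl) (hD_int (n + 1))]
  have hp_succ : p (n + 1) ω = p n ω * (1 + a n ω) := prod_range_succ _ _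
  have hD_succ : D (n + 1) ω = D n ω + (c n ω - b n ω) / p (n + 1) ω := sum_range_succ _ _
  calc (p (n + 1) ω)⁻¹ * μ[V (n + 1) | ℱ n] ω + D (n + 1) ω
      ≤ (p (n + 1) ω)⁻¹ * ((1 + a n ω) * V n ω + b n ω - c n ω) + D (n + 1) ω := by
        gcongr
        exact inv_nonneg.2 (zero_le_one.trans (hp1 _ _))
    _ = V n ω / p n ω + D n ω := by
        have := hp1 n ω
        have := ha_nonneg n ω
        rw [hD_succ, hp_succ]
        field_simp
        ring

theorem robbins_siegmund {V a b c : ℕ → Ω → ℝ}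
    (hV : StronglyAdapted ℱ V) (ha : StronglyAdapted ℱ a) (hb : StronglyAdapted ℱ b)
    (hc : StronglyAdapted ℱ c) (hV_int : ∀ n, Integrable (V n) μ)
    (hb_int : ∀ n, Integrable (b n) μ) (hc_int : ∀ n, Integrable (c n) μ)
    (hV_nonneg : ∀ n ω, 0 ≤ V n ω) (ha_nonneg : ∀ n ω, 0 ≤ a n ω)
    (hb_nonneg : ∀ n ω, 0 ≤ b n ω) (hc_nonneg : ∀ n ω, 0 ≤ c n ω)
    (hVabc : ∀ n, μ[V (n + 1) | ℱ n] ≤ᵐ[μ] fun ω => (1 + a n ω) * V n ω + b n ω - c n ω) :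
    ∀ᵐ ω ∂μ, Summable (fun n => a n ω) → Summable (fun n => b n ω) →
      (∃ L, Tendsto (fun n => V n ω) atTop (𝓝 L)) ∧ Summable fun n => c n ω := by
  have hp1 : ∀ n ω, 1 ≤ ∏ k ∈ range n, (1 + a k ω) := fun n ω =>
    one_le_prod_one_add (ha_nonneg · ω) _
  have hR_ge : ∀ n ω, -∑ k ∈ range n, b k ω ≤ V n ω / ∏ k ∈ range n, (1 + a k ω) +
      ∑ k ∈ range n, (c k ω - b k ω) / ∏ j ∈ range (k + 1), (1 + a j ω) := fun n ω => by
    have hVp := div_nonneg (hV_nonneg n ω) (zero_le_one.trans (hp1 n ω))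
    have hD : ∀ k, -b k ω ≤ (c k ω - b k ω) / ∏ j ∈ range (k + 1), (1 + a j ω) := fun k => by
      rw [le_div_iff₀ (zero_lt_one.trans_le (hp1 _ _))]
      nlinarith [hc_nonneg k ω, hb_nonneg k ω, hp1 (k + 1) ω]
    have := sum_le_sum fun k (_ : k ∈ range n) => hD k
    rw [sum_neg_distrib] at this
    linarith
  filter_upwards [(supermartingale_div_prod_add_sum hV ha hb hc hV_int hb_int hc_int ha_nonneg
    hVabc).ae_exists_tendsto_of_summable hb hb_nonneg hR_ge] with ω hω ha_sum hb_sum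
  exact tendsto_and_summable_of_tendsto_div_prod_add_sum (hV_nonneg · ω) (ha_nonneg · ω)
    (hc_nonneg · ω) ha_sum hb_sum (hω hb_sum)

theorem ae_tendsto_zero_of_condExp_le {V β : ℕ → Ω → ℝ} (hV : StronglyAdapted ℱ V)
    (hβ : StronglyAdapted ℱ β) (hV_int : ∀ n, Integrable (V n) μ) (hV_nonneg : ∀ n ω, 0 ≤ V n ω)
    (hβ01 : ∀ n ω, β n ω ∈ Set.Icc (0 : ℝ) 1) {A B : ℝ} (hA : 0 ≤ A) (hB : 0 ≤ B)
    (hVβ : ∀ n, μ[V (n + 1) | ℱ n] ≤ᵐ[μ]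
      fun ω => (1 - β n ω) * V n ω + β n ω ^ 2 * (A * V n ω + B)) :
    ∀ᵐ ω ∂μ, Summable (fun n => β n ω ^ 2) → ¬ Summable (fun n => β n ω) →
      Tendsto (fun n => V n ω) atTop (𝓝 0) := by
  have hβ_sq_le : ∀ n ω, β n ω ^ 2 ≤ 1 := fun n ω =>
    pow_le_one₀ (hβ01 n ω).1 (hβ01 n ω).2
  have hb_int : ∀ n, Integrable (fun ω => B * β n ω ^ 2) μ := fun n =>
    .of_bound ((stronglyMeasurable_const.mul ((hβ n).pow 2)).mono (ℱ.le n)).aestronglyMeasurable B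
      (ae_of_all _ fun ω => by
        rw [Real.norm_of_nonneg (by positivity)]
        exact mul_le_of_le_one_right hB (hβ_sq_le n ω))
  have hc_int : ∀ n, Integrable (fun ω => β n ω * V n ω) μ := fun n =>
    (hV_int n).bdd_mul ((hβ n).mono (ℱ.le n)).aestronglyMeasurable (c := 1) (ae_of_all _ fun ω => by
      rw [Real.norm_of_nonneg (hβ01 n ω).1]
      exact (hβ01 n ω).2)
  have hRS := robbins_siegmund (a := fun n ω => A * β n ω ^ 2) (b := fun n ω => B * β n ω ^ 2)
    (c := fun n ω => β n ω * V n ω) hV (fun n => stronglyMeasurable_const.mul ((hβ n).pow 2))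
    (fun n => stronglyMeasurable_const.mul ((hβ n).pow 2)) (fun n => (hβ n).mul (hV n)) hV_int
    hb_int hc_int hV_nonneg (fun n ω => by positivity) (fun n ω => by positivity)
    (fun n ω => mul_nonneg (hβ01 n ω).1 (hV_nonneg n ω)) fun n => by
      filter_upwards [hVβ n] with ω hω
      exact hω.trans_eq (by ring)
  filter_upwards [hRS] with ω hω hsq hdiv
  obtain ⟨⟨L, hL⟩, hc⟩ := hω (hsq.mul_left A) (hsq.mul_left B)
  rwa [eq_zero_of_tendsto_of_summable_mul hL (hV_nonneg · ω) (fun n => (hβ01 n ω).1) hc hdiv] at hL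

end MeasureTheory

namespace StochasticApproximation

variable {Ω : Type*} {m0 : MeasurableSpace Ω} {μ : Measure Ω} [IsFiniteMeasure μ]
  {ℱ : Filtration ℕ m0}

theorem ae_tendsto_zero_of_forall_abs_le {x w η : ℕ → Ω → ℝ} (hx : StronglyAdapted ℱ x)
    (hη : StronglyAdapted ℱ η) (hw_int : ∀ t, Integrable (w t) μ)
    (hw_sq_int : ∀ t, Integrable (fun ω => w t ω ^ 2) μ)
    (hrec : ∀ t ω, x (t + 1) ω = (1 - η t ω) * x t ω + η t ω * w t ω) {A B : ℝ} (hA : 0 ≤ A)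
    (hB : 0 ≤ B) (hmoment : ∀ t, μ[fun ω => w t ω ^ 2 | ℱ t] ≤ᵐ[μ] fun ω => A * x t ω ^ 2 + B)
    (hmean : ∀ t, μ[w t | ℱ t] =ᵐ[μ] 0) (hη01 : ∀ t ω, η t ω ∈ Set.Icc (0 : ℝ) 1) {M : ℝ}
    (hx0 : ∀ ω, |x 0 ω| ≤ M) :
    ∀ᵐ ω ∂μ, Summable (fun t => η t ω ^ 2) → ¬ Summable (fun t => η t ω) →
      Tendsto (fun t => x t ω) atTop (𝓝 0) := by
  have hw2 : ∀ t, MemLp (w t) 2 μ := fun t =>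
    (memLp_two_iff_integrable_sq (hw_int t).1).2 (hw_sq_int t)
  have hx2 : ∀ t, MemLp (x t) 2 μ := by
    intro t
    induction t with
    | zero => exact .of_bound ((hx 0).mono (ℱ.le 0)).aestronglyMeasurable M (ae_of_all _ hx0)
    | succ t ih =>
      rw [show x (t + 1) = _ from funext (hrec t)]
      exact ih.convexComb (hw2 t) ((hη t).mono (ℱ.le t)).aestronglyMeasurable (hη01 t)
  have hdrift : ∀ t, μ[fun ω => x (t + 1) ω ^ 2 | ℱ t] ≤ᵐ[μ]
      fun ω => (1 - η t ω) * x t ω ^ 2 + η t ω ^ 2 * (A * x t ω ^ 2 + B) := fun t => by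
    simp_rw [hrec t]
    exact condExp_sq_convexComb_le (ℱ.le t) (hx t) (hη t) (hη01 t) (hx2 t) (hw2 t) (hmean t)
      (hmoment t)
  filter_upwards [ae_tendsto_zero_of_condExp_le (fun t => (hx t).pow 2) hη
    (fun t => (hx2 t).integrable_sq) (fun t ω => sq_nonneg _) hη01 hA hB hdrift] with ω hω hsq hdiv
  exact (tendsto_zero_iff_abs_tendsto_zero _).2
    (by simpa [Function.comp_def, Real.sqrt_sq_eq_abs] using (hω hsq hdiv).sqrt)

theorem ae_tendsto_zero_of_abs_le {x w η : ℕ → Ω → ℝ} (hx : StronglyAdapted ℱ x)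
    (hη : StronglyAdapted ℱ η) (hw_int : ∀ t, Integrable (w t) μ)
    (hw_sq_int : ∀ t, Integrable (fun ω => w t ω ^ 2) μ)
    (hrec : ∀ t ω, x (t + 1) ω = (1 - η t ω) * x t ω + η t ω * w t ω) {A B : ℝ} (hA : 0 ≤ A)
    (hB : 0 ≤ B) (hmoment : ∀ t, μ[fun ω => w t ω ^ 2 | ℱ t] ≤ᵐ[μ] fun ω => A * x t ω ^ 2 + B)
    (hmean : ∀ t, μ[w t | ℱ t] =ᵐ[μ] 0) (hη01 : ∀ t ω, η t ω ∈ Set.Icc (0 : ℝ) 1) {M : ℝ}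
    (hM : 0 ≤ M) :
    ∀ᵐ ω ∂μ, |x 0 ω| ≤ M → Summable (fun t => η t ω ^ 2) → ¬ Summable (fun t => η t ω) →
      Tendsto (fun t => x t ω) atTop (𝓝 0) := by
  set S : Set Ω := {ω | |x 0 ω| ≤ M}
  have hS : ∀ t, MeasurableSet[ℱ t] S := fun t =>
    ℱ.mono t.zero_le _ ((measurable_abs.comp (hx 0).measurable) measurableSet_Iic)
  have hS_sq : ∀ t, (fun ω => S.indicator (w t) ω ^ 2) = S.indicator fun ω => w t ω ^ 2 :=
    fun t => funext fun ω => by by_cases h : ω ∈ S <;> simp [h]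
  have hxS : ∀ ω, |S.indicator (x 0) ω| ≤ M := fun ω => by
    by_cases h : ω ∈ S
    · rwa [Set.indicator_of_mem h]
    · rwa [Set.indicator_of_notMem h, abs_zero]
  have hrecS : ∀ t ω, S.indicator (x (t + 1)) ω =
      (1 - η t ω) * S.indicator (x t) ω + η t ω * S.indicator (w t) ω := fun t ω => by
    by_cases h : ω ∈ S <;> simp [h, hrec]
  have hmomentS : ∀ t, μ[fun ω => S.indicator (w t) ω ^ 2 | ℱ t] ≤ᵐ[μ]
      fun ω => A * S.indicator (x t) ω ^ 2 + B := fun t => by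
    rw [hS_sq]
    filter_upwards [condExp_indicator (hw_sq_int t) (hS t), hmoment t] with ω h_ind h_le
    rw [h_ind]
    by_cases h : ω ∈ S <;> simp [h, h_le, hB]
  have hmeanS : ∀ t, μ[S.indicator (w t) | ℱ t] =ᵐ[μ] 0 := fun t => by
    filter_upwards [condExp_indicator (hw_int t) (hS t), hmean t] with ω h_ind h_zero
    rw [h_ind]
    by_cases h : ω ∈ S <;> simp [h, h_zero]
  filter_upwards [ae_tendsto_zero_of_forall_abs_le (fun t => (hx t).indicator (hS t)) hη
    (fun t => (hw_int t).indicator (ℱ.le t _ (hS t)))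
    (fun t => hS_sq t ▸ (hw_sq_int t).indicator (ℱ.le t _ (hS t))) hrecS hA hB hmomentS hmeanS
    hη01 hxS] with ω hω hω_S
  have hxS_eq : ∀ t, S.indicator (x t) ω = x t ω := fun t =>
    Set.indicator_of_mem (show ω ∈ S from hω_S) _
  simpa only [hxS_eq] using hω

theorem ae_tendsto_zero {x w η : ℕ → Ω → ℝ} (hx : StronglyAdapted ℱ x)
    (hη : StronglyAdapted ℱ η) (hw_int : ∀ t, Integrable (w t) μ)
    (hw_sq_int : ∀ t, Integrable (fun ω => w t ω ^ 2) μ)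
    (hrec : ∀ t ω, x (t + 1) ω = (1 - η t ω) * x t ω + η t ω * w t ω) {A B : ℝ} (hA : 0 ≤ A)
    (hB : 0 ≤ B) (hmoment : ∀ t, μ[fun ω => w t ω ^ 2 | ℱ t] ≤ᵐ[μ] fun ω => A * x t ω ^ 2 + B)
    (hmean : ∀ t, μ[w t | ℱ t] =ᵐ[μ] 0) (hη01 : ∀ t ω, η t ω ∈ Set.Icc (0 : ℝ) 1) :
    ∀ᵐ ω ∂μ, Summable (fun t => η t ω ^ 2) → ¬ Summable (fun t => η t ω) →
      Tendsto (fun t => x t ω) atTop (𝓝 0) := by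
  filter_upwards [ae_all_iff.2 fun M : ℕ => ae_tendsto_zero_of_abs_le hx hη hw_int hw_sq_int hrec
    hA hB hmoment hmean hη01 M.cast_nonneg] with ω hω
  exact hω _ (Nat.le_ceil _)

end StochasticApproximation

theorem stochastic_approximation_to_zero_general
    {Ω : Type*} {m : MeasurableSpace Ω} {P : Measure Ω} [IsProbabilityMeasure P]
    (ℱ : Filtration ℕ m) (x w η : ℕ → Ω → ℝ)
    -- x_t, η_t and w_{t-1} are ℱ_{t-1}-measurable:
    (hx_meas : ∀ t : ℕ, StronglyMeasurable[ℱ t] (x (t + 1)))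
    (hη_meas : ∀ t : ℕ, StronglyMeasurable[ℱ t] (η (t + 1)))
    -- integrability, needed so the conditional expectations are meaningful:
    (hw_int : ∀ t : ℕ, Integrable (w t) P)
    (hw_sq_int : ∀ t : ℕ, Integrable (fun ω => (w t ω) ^ 2) P)
    -- the recursion:
    (hrec : ∀ t : ℕ, ∀ ω, x (t + 1) ω = (1 - η t ω) * x t ω + η t ω * w t ω)
    -- (1) conditionally bounded second moments:
    (A B : ℝ)
    (hmoment : ∀ t : ℕ,
      ∀ᵐ ω ∂P, (P[(fun ω => (w (t + 1) ω) ^ 2) | ℱ t]) ω ≤ A * |x (t + 1) ω| ^ 2 + B)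
    -- (2) zero conditional mean:
    (hmean : ∀ t : ℕ, ∀ᵐ ω ∂P, (P[w (t + 1) | ℱ t]) ω = 0)
    -- (3) step sizes in [0,1]:
    (hη01 : ∀ t : ℕ, ∀ ω, η t ω ∈ Set.Icc (0 : ℝ) 1)
    -- (4) ∑ η_t = ∞ a.s.:
    (hη_div : ∀ᵐ ω ∂P, ¬ Summable (fun t => η t ω))
    -- (5) ∑ η_t² < ∞ a.s.:
    (hη_sq : ∀ᵐ ω ∂P, Summable (fun t => (η t ω) ^ 2)) :
    ∀ᵐ ω ∂P, Tendsto (fun t => x t ω) atTop (𝓝 (0 : ℝ)) := by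
  have hmoment' : ∀ t, P[fun ω => w (t + 1) ω ^ 2 | ℱ t] ≤ᵐ[P]
      fun ω => max A 0 * x (t + 1) ω ^ 2 + max B 0 := fun t => by
    filter_upwards [hmoment t] with ω hω
    rw [sq_abs] at hω
    nlinarith [le_max_left A 0, le_max_left B 0, sq_nonneg (x (t + 1) ω)]
  have h_shifted := StochasticApproximation.ae_tendsto_zero (x := fun t => x (t + 1))
    (w := fun t => w (t + 1)) (η := fun t => η (t + 1)) hx_meas hη_meas (fun t => hw_int _)
    (fun t => hw_sq_int _) (fun t => hrec (t + 1)) (le_max_right A 0) (le_max_right B 0)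
    hmoment' hmean (fun t => hη01 _)
  filter_upwards [h_shifted, hη_div, hη_sq] with ω hω hdiv hsq
  exact (tendsto_add_atTop_iff_nat (f := fun t => x t ω) 1).1
    (hω ((summable_nat_add_iff (f := fun t => η t ω ^ 2) 1).2 hsq)
      (mt (summable_nat_add_iff (f := fun t => η t ω) 1).1 hdiv))

/-- Stochastic approximation convergence (Lemma 1 of Singh et al. / Lemma 2 of the paper):
if `x_{t+1} = (1 - η_t) x_t + η_t w_t` with zero-mean noise of conditionally bounded second
moment and step sizes in `[0,1]` that sum to infinity but are square-summable, then
`x_t → 0` almost surely. Here `x t`, `η t` and `w (t-1)` are `ℱ (t-1)`-measurable,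
expressed by a shift of index. -/
theorem stochastic_approximation_to_zero
    {Ω : Type*} {m : MeasurableSpace Ω} {P : Measure Ω} [IsProbabilityMeasure P]
    (ℱ : Filtration ℕ m) (x w η : ℕ → Ω → ℝ)
    -- x_t, η_t and w_{t-1} are ℱ_{t-1}-measurable:
    (hx_meas : ∀ t : ℕ, StronglyMeasurable[ℱ t] (x (t + 1)))
    (hη_meas : ∀ t : ℕ, StronglyMeasurable[ℱ t] (η (t + 1)))
    (hw_meas : ∀ t : ℕ, StronglyMeasurable[ℱ t] (w t))
    -- integrability, needed so the conditional expectations are meaningful: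
    (hw_int : ∀ t : ℕ, Integrable (w t) P)
    (hw_sq_int : ∀ t : ℕ, Integrable (fun ω => (w t ω) ^ 2) P)
    -- the recursion:
    (hrec : ∀ t : ℕ, ∀ ω, x (t + 1) ω = (1 - η t ω) * x t ω + η t ω * w t ω)
    -- (1) conditionally bounded second moments:
    (A B : ℝ)
    (hmoment : ∀ t : ℕ,
      ∀ᵐ ω ∂P, (P[(fun ω => (w (t + 1) ω) ^ 2) | ℱ t]) ω ≤ A * |x (t + 1) ω| ^ 2 + B)
    -- (2) zero conditional mean:
    (hmean : ∀ t : ℕ, ∀ᵐ ω ∂P, (P[w (t + 1) | ℱ t]) ω = 0)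
    -- (3) step sizes in [0,1]:
    (hη01 : ∀ t : ℕ, ∀ ω, η t ω ∈ Set.Icc (0 : ℝ) 1)
    -- (4) ∑ η_t = ∞ a.s.:
    (hη_div : ∀ᵐ ω ∂P, ¬ Summable (fun t => η t ω))
    -- (5) ∑ η_t² < ∞ a.s.:
    (hη_sq : ∀ᵐ ω ∂P, Summable (fun t => (η t ω) ^ 2)) :
    ∀ᵐ ω ∂P, Tendsto (fun t => x t ω) atTop (𝓝 (0 : ℝ)) :=
  stochastic_approximation_to_zero_general ℱ x w η hx_meas hη_meas hw_int hw_sq_int hrec A B hmoment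
    hmean hη01 hη_div hη_sq
end

section
/- Adopt the visitation setup: (Ω, ℱ, P) a probability space with filtration (ℱ_t)_{t∈ℕ}, δ ∈ (0,1], for each t a random variable q_t that is ℱ_t-measurable with δ ≤ q_t ≤ 1 almost surely, and an indicator random variable I_t ∈ {0,1} that is ℱ_{t+1}-measurable with E[I_t | ℱ_t] = q_t almost surely; set n_t = ∑_{τ<t} I_τ. Let β : ℕ → [0, ∞) satisfy ∑_{t=0}^∞ β(t)² < ∞ and suppose there exists T ∈ ℕ such that β is nonincreasing on {t : t > T}. Then, almost surely, ∑_{t=0}^∞ β(n_t)² < ∞. -/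
/-!
The counter leaves its current level `k` at each step with conditional probability at least `δ`,
and it leaves each level at most once; hence the expected number of times `t` with `n_t = k` is
at most `1/δ`. Summing over `k`, `E[∑_t β(n_t)²] ≤ δ⁻¹ ∑_k β(k)² < ∞`, so the series converges
almost surely.
-/

open MeasureTheory

theorem ofReal_mul_measure_le_measure_inter_of_le_condExp {Ω : Type*} {m m₀ : MeasurableSpace Ω}
    {P : Measure Ω} [IsFiniteMeasure P] (hm : m ≤ m₀) {O : Set Ω} (hO : MeasurableSet O) {δ : ℝ}
    (hδ : ∀ᵐ ω ∂P, δ ≤ P[O.indicator 1 | m] ω) {A : Set Ω} (hA : MeasurableSet[m] A) :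
    ENNReal.ofReal δ * P A ≤ P (A ∩ O) := by
  have hreal : δ * P.real A ≤ P.real (A ∩ O) :=
    calc δ * P.real A = ∫ _ in A, δ ∂P := by rw [setIntegral_const, smul_eq_mul, mul_comm]
      _ ≤ ∫ x in A, P[O.indicator 1 | m] x ∂P :=
        setIntegral_mono_ae integrableOn_const integrable_condExp.integrableOn hδ
      _ = ∫ x in A, O.indicator 1 x ∂P :=
        setIntegral_condExp hm ((integrable_const 1).indicator hO) hA
      _ = P.real (A ∩ O) := by
        rw [integral_indicator_one hO, measureReal_restrict_apply hO, Set.inter_comm]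
  calc ENNReal.ofReal δ * P A = ENNReal.ofReal (δ * P.real A) := by
        rw [ENNReal.ofReal_mul' measureReal_nonneg, ofReal_measureReal]
    _ ≤ ENNReal.ofReal (P.real (A ∩ O)) := ENNReal.ofReal_le_ofReal hreal
    _ = P (A ∩ O) := ofReal_measureReal

theorem lintegral_comp_eq_tsum_mul_measure {Ω : Type*} {m : MeasurableSpace Ω} {P : Measure Ω}
    {N : Ω → ℕ} (hN : Measurable N) (g : ℕ → ENNReal) :
    ∫⁻ ω, g (N ω) ∂P = ∑' k, g k * P {ω | N ω = k} := by
  rw [← lintegral_map measurable_from_nat hN, lintegral_countable']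
  refine tsum_congr fun k => ?_
  rw [Measure.map_apply hN (measurableSet_singleton k)]
  rfl

theorem indicator_setOf_eq_one_eq {Ω : Type*} {f : Ω → ℝ} (hf : ∀ ω, f ω = 0 ∨ f ω = 1) :
    {ω | f ω = 1}.indicator 1 = f := by
  ext ω
  rcases hf ω with h | h <;> simp [h]

namespace VisitCount

variable {Ω : Type*} {I : ℕ → Ω → ℝ} {n : ℕ → Ω → ℕ}

theorem natCast_succ_eq_add (hn : ∀ t ω, (n t ω : ℝ) = ∑ τ ∈ Finset.range t, I τ ω) (t : ℕ)
    (ω : Ω) : (n (t + 1) ω : ℝ) = n t ω + I t ω := by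
  rw [hn, hn, Finset.sum_range_succ]

theorem monotone (hn : ∀ t ω, (n t ω : ℝ) = ∑ τ ∈ Finset.range t, I τ ω)
    (hI : ∀ t ω, 0 ≤ I t ω) (ω : Ω) : Monotone (n · ω) :=
  monotone_nat_of_le_succ fun t => by
    have := natCast_succ_eq_add hn t ω
    exact_mod_cast (show (n t ω : ℝ) ≤ n (t + 1) ω by linarith [hI t ω])

theorem succ_eq_of_eq_one (hn : ∀ t ω, (n t ω : ℝ) = ∑ τ ∈ Finset.range t, I τ ω) {t : ℕ}
    {ω : Ω} (h : I t ω = 1) : n (t + 1) ω = n t ω + 1 := by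
  have hcast : (n (t + 1) ω : ℝ) = n t ω + 1 := by rw [natCast_succ_eq_add hn, h]
  exact_mod_cast hcast

theorem pairwise_disjoint_setOf_eq_inter_eq_one
    (hn : ∀ t ω, (n t ω : ℝ) = ∑ τ ∈ Finset.range t, I τ ω)
    (hI01 : ∀ t ω, I t ω = 0 ∨ I t ω = 1) (k : ℕ) :
    Pairwise (Function.onFun Disjoint fun t => {ω | n t ω = k} ∩ {ω | I t ω = 1}) := by
  have hmono := monotone hn fun t ω => by rcases hI01 t ω with h | h <;> simp [h]
  suffices ∀ s t, s < t → Disjoint ({ω | n s ω = k} ∩ {ω | I s ω = 1})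
      ({ω | n t ω = k} ∩ {ω | I t ω = 1}) from
    fun s t hst => hst.lt_or_gt.elim (this s t) fun h => (this t s h).symm
  intro s t hst
  refine Set.disjoint_left.2 fun ω ⟨hs, hIs⟩ ⟨ht, _⟩ => ?_
  have := hmono ω (Nat.succ_le_of_lt hst)
  simp only [Set.mem_ofPred_eq] at hs hIs ht this
  rw [succ_eq_of_eq_one hn hIs] at this
  omega

variable {m : MeasurableSpace Ω} {ℱ : Filtration ℕ m}

theorem measurable
    (hn : ∀ t ω, (n t ω : ℝ) = ∑ τ ∈ Finset.range t, I τ ω)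
    (hI_meas : ∀ t, StronglyMeasurable[ℱ (t + 1)] (I t)) (t : ℕ) :
    Measurable[ℱ t] (n t) := by
  have hsum : StronglyMeasurable[ℱ t] fun ω => ∑ τ ∈ Finset.range t, I τ ω :=
    Finset.stronglyMeasurable_fun_sum _ fun τ hτ =>
      (hI_meas τ).mono (ℱ.mono (Finset.mem_range.1 hτ))
  convert Nat.measurable_floor.comp hsum.measurable
  ext ω
  simp only [Function.comp_apply, ← hn, Nat.floor_natCast]

variable {P : Measure Ω} [IsFiniteMeasure P] {δ : ℝ}

theorem ofReal_mul_tsum_measure_setOf_eq_le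
    (hI01 : ∀ t ω, I t ω = 0 ∨ I t ω = 1) (hI_meas : ∀ t, StronglyMeasurable[ℱ (t + 1)] (I t))
    (hδ : ∀ t, ∀ᵐ ω ∂P, δ ≤ P[I t | ℱ t] ω)
    (hn : ∀ t ω, (n t ω : ℝ) = ∑ τ ∈ Finset.range t, I τ ω) (k : ℕ) :
    ENNReal.ofReal δ * ∑' t, P {ω | n t ω = k} ≤ P Set.univ := by
  have hvisit : ∀ t, MeasurableSet {ω | I t ω = 1} := fun t =>
    (hI_meas t).measurable.mono (ℱ.le _) le_rfl (measurableSet_singleton 1)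
  calc ENNReal.ofReal δ * ∑' t, P {ω | n t ω = k}
      = ∑' t, ENNReal.ofReal δ * P {ω | n t ω = k} := ENNReal.tsum_mul_left.symm
    _ ≤ ∑' t, P ({ω | n t ω = k} ∩ {ω | I t ω = 1}) := ENNReal.tsum_le_tsum fun t =>
        ofReal_mul_measure_le_measure_inter_of_le_condExp (ℱ.le t) (hvisit t)
          (by rw [indicator_setOf_eq_one_eq (hI01 t)]; exact hδ t)
          (measurable hn hI_meas t (measurableSet_singleton k))
    _ = P (⋃ t, {ω | n t ω = k} ∩ {ω | I t ω = 1}) :=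
        (measure_iUnion (pairwise_disjoint_setOf_eq_inter_eq_one hn hI01 k) fun t =>
          ((measurable hn hI_meas t).mono (ℱ.le t) le_rfl
            (measurableSet_singleton k)).inter (hvisit t)).symm
    _ ≤ P Set.univ := measure_mono (Set.subset_univ _)

theorem ofReal_mul_lintegral_tsum_comp_le
    (hI01 : ∀ t ω, I t ω = 0 ∨ I t ω = 1) (hI_meas : ∀ t, StronglyMeasurable[ℱ (t + 1)] (I t))
    (hδ : ∀ t, ∀ᵐ ω ∂P, δ ≤ P[I t | ℱ t] ω)
    (hn : ∀ t ω, (n t ω : ℝ) = ∑ τ ∈ Finset.range t, I τ ω) (g : ℕ → ENNReal) :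
    ENNReal.ofReal δ * ∫⁻ ω, ∑' t, g (n t ω) ∂P ≤ P Set.univ * ∑' k, g k := by
  have hn_meas : ∀ t, Measurable (n t) := fun t =>
    (measurable hn hI_meas t).mono (ℱ.le t) le_rfl
  calc ENNReal.ofReal δ * ∫⁻ ω, ∑' t, g (n t ω) ∂P
      = ∑' k, g k * (ENNReal.ofReal δ * ∑' t, P {ω | n t ω = k}) := by
        rw [lintegral_tsum (f := fun t ω => g (n t ω)) fun t =>
          (measurable_from_nat.comp (hn_meas t)).aemeasurable]
        simp_rw [lintegral_comp_eq_tsum_mul_measure (hn_meas _)]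
        rw [ENNReal.tsum_comm]
        simp_rw [← ENNReal.tsum_mul_left]
        exact tsum_congr fun k => tsum_congr fun t => by ring
    _ ≤ ∑' k, g k * P Set.univ := ENNReal.tsum_le_tsum fun k =>
        mul_le_mul_right (ofReal_mul_tsum_measure_setOf_eq_le hI01 hI_meas hδ hn k) _
    _ = P Set.univ * ∑' k, g k := by rw [ENNReal.tsum_mul_right, mul_comm]

end VisitCount

theorem sq_summable_beta_comp_visits_general
    {Ω : Type*} {m : MeasurableSpace Ω} {P : Measure Ω} [IsProbabilityMeasure P]
    (ℱ : Filtration ℕ m) (δ : ℝ) (hδ : δ ∈ Set.Ioc (0 : ℝ) 1)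
    (q : ℕ → Ω → ℝ)
    (hq_bdd : ∀ t, ∀ᵐ ω ∂P, δ ≤ q t ω ∧ q t ω ≤ 1)
    (I : ℕ → Ω → ℝ)
    (hI01 : ∀ t ω, I t ω = 0 ∨ I t ω = 1)
    (hI_meas : ∀ t, StronglyMeasurable[ℱ (t + 1)] (I t))
    (hIq : ∀ t, P[I t | ℱ t] =ᵐ[P] q t)
    (n : ℕ → Ω → ℕ)
    (hn : ∀ t ω, (n t ω : ℝ) = ∑ τ ∈ Finset.range t, I τ ω)
    (β : ℕ → ℝ)
    (hβ_sq : Summable (fun t => (β t) ^ 2)) :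
    ∀ᵐ ω ∂P, Summable (fun t => (β (n t ω)) ^ 2) := by
  have hδ_condExp : ∀ t, ∀ᵐ ω ∂P, δ ≤ P[I t | ℱ t] ω := fun t => by
    filter_upwards [hq_bdd t, hIq t] with ω hq hI using hI ▸ hq.1
  have hbound := VisitCount.ofReal_mul_lintegral_tsum_comp_le hI01 hI_meas hδ_condExp hn
    fun k => ENNReal.ofReal (β k ^ 2)
  rw [measure_univ, one_mul] at hbound
  have hfinite : ∫⁻ ω, ∑' t, ENNReal.ofReal (β (n t ω) ^ 2) ∂P ≠ ⊤ :=
    (ENNReal.lt_top_of_mul_ne_top_right (hbound.trans_lt hβ_sq.tsum_ofReal_lt_top).ne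
      (ENNReal.ofReal_pos.2 hδ.1).ne').ne
  have hn_meas : ∀ t, Measurable (n t) := fun t =>
    (VisitCount.measurable hn hI_meas t).mono (ℱ.le t) le_rfl
  have hmeas : Measurable fun ω => ∑' t, ENNReal.ofReal (β (n t ω) ^ 2) :=
    .tsum fun t => (measurable_from_nat (f := fun k => ENNReal.ofReal (β k ^ 2))).comp (hn_meas t)
  filter_upwards [ae_lt_top hmeas hfinite] with ω hω
  simpa only [ENNReal.toReal_ofReal (sq_nonneg _)] using ENNReal.summable_toReal hω.ne

/-- Visitation setup: with visit indicators `I t` whose conditional probabilities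
`q t ∈ [δ, 1]`, visit counters `n_t = ∑_{τ<t} I_τ`, and an eventually nonincreasing
square-summable step-size schedule `β`, almost surely `∑_t β(n_t)² < ∞`. -/
theorem sq_summable_beta_comp_visits
    {Ω : Type*} {m : MeasurableSpace Ω} {P : Measure Ω} [IsProbabilityMeasure P]
    (ℱ : Filtration ℕ m) (δ : ℝ) (hδ : δ ∈ Set.Ioc (0 : ℝ) 1)
    (q : ℕ → Ω → ℝ)
    (hq_meas : ∀ t, StronglyMeasurable[ℱ t] (q t))
    (hq_bdd : ∀ t, ∀ᵐ ω ∂P, δ ≤ q t ω ∧ q t ω ≤ 1)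
    (I : ℕ → Ω → ℝ)
    (hI01 : ∀ t ω, I t ω = 0 ∨ I t ω = 1)
    (hI_meas : ∀ t, StronglyMeasurable[ℱ (t + 1)] (I t))
    (hIq : ∀ t, P[I t | ℱ t] =ᵐ[P] q t)
    (n : ℕ → Ω → ℕ)
    (hn : ∀ t ω, (n t ω : ℝ) = ∑ τ ∈ Finset.range t, I τ ω)
    (β : ℕ → ℝ) (hβ_nonneg : ∀ t, 0 ≤ β t)
    (hβ_sq : Summable (fun t => (β t) ^ 2))
    (T : ℕ) (hβ_mono : ∀ s t : ℕ, T < s → s ≤ t → β t ≤ β s) :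
    ∀ᵐ ω ∂P, Summable (fun t => (β (n t ω)) ^ 2) :=
  sq_summable_beta_comp_visits_general ℱ δ hδ q hq_bdd I hI01 hI_meas hIq n hn β hβ_sq
end

section
/- Adopt the visitation setup: (Ω, ℱ, P) a probability space with filtration (ℱ_t)_{t∈ℕ}, δ ∈ (0,1], for each t a random variable q_t that is ℱ_t-measurable with δ ≤ q_t ≤ 1 almost surely, and an indicator random variable I_t ∈ {0,1} that is ℱ_{t+1}-measurable with E[I_t | ℱ_t] = q_t almost surely; set n_t = ∑_{τ<t} I_τ. Let β : ℕ → [0, ∞) satisfy ∑_{t=0}^∞ β(t) = ∞ and ∑_{t=0}^∞ β(t)² < ∞, and suppose there exists T ∈ ℕ such that β is nonincreasing on {t : t > T}. Then, almost surely, ∑_{t=0}^∞ q_t β(n_t) = ∞ and ∑_{t=0}^∞ q_t² β(n_t)² < ∞. -/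
/-!
The visit counter `n_t` moves by unit steps, and its compensator `∑_{τ<t} q_τ ≥ δ t` diverges, so
by Lévy's extension of the Borel–Cantelli lemma `n_t → ∞` almost surely. Hence `n_t` takes every
value, `(β(n_t))_t` contains every `β(k)`, and `q_t ≥ δ` forces `∑ q_t β(n_t) = ∞`.

For the squares, `β(n_t)²` is `ℱ_t`-measurable, so `E[q_t β(n_t)²] = E[I_t β(n_t)²]`, while
pathwise `∑_{t<N} I_t β(n_t)² = ∑_{k<n_N} β(k)² ≤ ∑ β²`. Thus `∑ q_t β(n_t)²` has finite
expectation and is finite almost surely, and `q_t² ≤ q_t`.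
-/

open MeasureTheory Filter Topology Finset

section Visits

variable {I : ℕ → ℝ} {n : ℕ → ℕ}

lemma visits_zero (hn : ∀ t, (n t : ℝ) = ∑ τ ∈ range t, I τ) : n 0 = 0 := by
  simpa using hn 0

lemma visits_succ (hI01 : ∀ t, I t = 0 ∨ I t = 1)
    (hn : ∀ t, (n t : ℝ) = ∑ τ ∈ range t, I τ) (t : ℕ) :
    I t = 0 ∧ n (t + 1) = n t ∨ I t = 1 ∧ n (t + 1) = n t + 1 := by
  have h : (n (t + 1) : ℝ) = n t + I t := by rw [hn, hn, sum_range_succ]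
  rcases hI01 t with hI | hI <;> rw [hI] at h
  · exact .inl ⟨hI, by exact_mod_cast h.trans (add_zero _)⟩
  · exact .inr ⟨hI, by exact_mod_cast h⟩

lemma visits_succ_le (hI01 : ∀ t, I t = 0 ∨ I t = 1)
    (hn : ∀ t, (n t : ℝ) = ∑ τ ∈ range t, I τ) (t : ℕ) : n (t + 1) ≤ n t + 1 := by
  rcases visits_succ hI01 hn t with ⟨-, h⟩ | ⟨-, h⟩ <;> omega

lemma sum_range_comp_visits_mul (hI01 : ∀ t, I t = 0 ∨ I t = 1)
    (hn : ∀ t, (n t : ℝ) = ∑ τ ∈ range t, I τ) (f : ℕ → ℝ) (N : ℕ) :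
    ∑ t ∈ range N, f (n t) * I t = ∑ k ∈ range (n N), f k := by
  induction N with
  | zero => simp [visits_zero hn]
  | succ N ih =>
    rcases visits_succ hI01 hn N with ⟨hI, hN⟩ | ⟨hI, hN⟩ <;>
      simp [sum_range_succ, ih, hI, hN]

end Visits

lemma Nat.surjective_of_tendsto_of_succ_le {f : ℕ → ℕ} (h0 : f 0 = 0)
    (hstep : ∀ t, f (t + 1) ≤ f t + 1) (htop : Tendsto f atTop atTop) :
    Function.Surjective f := by
  intro k
  obtain ⟨t, ht⟩ := (htop.eventually_ge_atTop k).exists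
  induction t with
  | zero => exact ⟨0, by omega⟩
  | succ t ih =>
    by_cases hk : k ≤ f t
    · exact ih hk
    · exact ⟨t + 1, by have := hstep t; omega⟩

lemma not_summable_comp_of_surjective {ι κ : Type*} {b : κ → ℝ} (hb : ¬Summable b)
    {g : ι → κ} (hg : g.Surjective) : ¬Summable (b ∘ g) := fun hs =>
  hb <| by simpa [Function.comp_def, Function.surjInv_eq hg] using
    hs.comp_injective (Function.injective_surjInv hg)

lemma not_summable_mul_of_le {ι : Type*} {q b : ι → ℝ} {δ : ℝ} (hδ : 0 < δ)
    (hq : ∀ i, δ ≤ q i) (hb : ¬Summable b) : ¬Summable fun i => q i * b i := fun hs =>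
  hb <| (hs.abs.mul_left δ⁻¹).of_norm_bounded fun i => by
    rw [Real.norm_eq_abs, abs_mul, le_inv_mul_iff₀ hδ, abs_of_pos (hδ.trans_le (hq i))]
    exact mul_le_mul_of_nonneg_right (hq i) (abs_nonneg _)

section Probability

variable {Ω : Type*} {m : MeasurableSpace Ω} {P : Measure Ω}

lemma ae_summable_norm_of_summable_integral_norm {ι E : Type*} [Countable ι]
    [NormedAddCommGroup E] {f : ι → Ω → E}
    (hf : ∀ t, Integrable (f t) P) (hsum : Summable fun t => ∫ ω, ‖f t ω‖ ∂P) :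
    ∀ᵐ ω ∂P, Summable fun t => ‖f t ω‖ := by
  refine summable_norm_of_tsum_eLpNorm_ne_top le_rfl (fun t => (hf t).aestronglyMeasurable) ?_
  simp_rw [eLpNorm_one_eq_lintegral_enorm, ← ofReal_integral_norm_eq_lintegral_enorm (hf _)]
  rw [← ENNReal.ofReal_tsum_of_nonneg (fun t => integral_nonneg fun _ => norm_nonneg _) hsum]
  exact ENNReal.ofReal_ne_top

variable [IsFiniteMeasure P] (ℱ : Filtration ℕ m)

theorem ae_tendsto_sum_atTop_of_le_condExp {I : ℕ → Ω → ℝ} {δ : ℝ} (hδ : 0 < δ)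
    (hI : ∀ t ω, I t ω ∈ Set.Icc 0 1) (hI_meas : ∀ t, StronglyMeasurable[ℱ (t + 1)] (I t))
    (hδI : ∀ t, ∀ᵐ ω ∂P, δ ≤ P[I t | ℱ t] ω) :
    ∀ᵐ ω ∂P, Tendsto (fun t => ∑ τ ∈ range t, I τ ω) atTop atTop := by
  set S : ℕ → Ω → ℝ := fun t ω => ∑ τ ∈ range t, I τ ω
  have hS_diff : ∀ t, S (t + 1) - S t = I t := fun t => by
    funext ω; simp [S, sum_range_succ]
  have hS_adapted : StronglyAdapted ℱ S := fun t =>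
    (Finset.measurable_sum _ fun τ hτ =>
      ((hI_meas τ).mono (ℱ.mono (mem_range.1 hτ))).measurable).stronglyMeasurable
  have hS_int : ∀ t, Integrable (S t) P := fun t =>
    integrable_finsetSum _ fun τ _ => .of_mem_Icc 0 1
      ((hI_meas τ).mono (ℱ.le _)).measurable.aemeasurable (.of_forall (hI τ))
  have hS_mono : ∀ᵐ ω ∂P, ∀ t, S t ω ≤ S (t + 1) ω := .of_forall fun ω t => by
    simp [S, sum_range_succ, (hI t ω).1]
  have hS_bdd : ∀ᵐ ω ∂P, ∀ t, |S (t + 1) ω - S t ω| ≤ ((1 : NNReal) : ℝ) :=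
    .of_forall fun ω t => by
      rw [← Pi.sub_apply, hS_diff, abs_of_nonneg (hI t ω).1]
      exact (hI t ω).2
  filter_upwards [tendsto_sum_indicator_atTop_iff hS_mono hS_adapted hS_int hS_bdd,
    ae_all_iff.2 hδI] with ω hS_iff hδω
  refine hS_iff.2 (tendsto_atTop_mono (fun t => ?_)
    (tendsto_natCast_atTop_atTop.atTop_mul_const hδ))
  calc (t : ℝ) * δ = ∑ _k ∈ range t, δ := by simp
    _ ≤ ∑ k ∈ range t, P[I k | ℱ k] ω := sum_le_sum fun k _ => hδω k
    _ = predictablePart S ℱ P t ω := by simp [predictablePart, Finset.sum_apply, hS_diff]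

theorem ae_summable_mul_condExp_of_sum_le {I X : ℕ → Ω → ℝ} {C : ℝ}
    (hI_nonneg : ∀ t ω, 0 ≤ I t ω) (hI_int : ∀ t, Integrable (I t) P)
    (hX_nonneg : ∀ t ω, 0 ≤ X t ω) (hX_meas : ∀ t, StronglyMeasurable[ℱ t] (X t))
    (hsum : ∀ N ω, ∑ t ∈ range N, X t ω * I t ω ≤ C) :
    ∀ᵐ ω ∂P, Summable fun t => X t ω * P[I t | ℱ t] ω := by
  have hXI_nonneg : ∀ t ω, 0 ≤ X t ω * I t ω := fun t ω =>
    mul_nonneg (hX_nonneg t ω) (hI_nonneg t ω)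
  have hXI_int : ∀ t, Integrable (fun ω => X t ω * I t ω) P := fun t =>
    .of_mem_Icc 0 C
      (((hX_meas t).mono (ℱ.le t)).measurable.aemeasurable.mul (hI_int t).aemeasurable)
      (.of_forall fun ω => ⟨hXI_nonneg t ω, (single_le_sum (fun s _ => hXI_nonneg s ω)
        (self_mem_range_succ t)).trans (hsum (t + 1) ω)⟩)
  have hpull : ∀ t, P[X t * I t | ℱ t] =ᵐ[P] X t * P[I t | ℱ t] := fun t =>
    condExp_mul_of_stronglyMeasurable_left (hX_meas t) (hXI_int t) (hI_int t)
  have hF_norm : ∀ t, (fun ω => ‖X t ω * P[I t | ℱ t] ω‖) =ᵐ[P] X t * P[I t | ℱ t] := fun t => by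
    filter_upwards [condExp_nonneg (.of_forall (hI_nonneg t))] with ω h
    exact Real.norm_of_nonneg (mul_nonneg (hX_nonneg t ω) h)
  have hF_integral : ∀ t, ∫ ω, ‖X t ω * P[I t | ℱ t] ω‖ ∂P = ∫ ω, X t ω * I t ω ∂P := fun t => by
    rw [integral_congr_ae ((hF_norm t).trans (hpull t).symm), integral_condExp (ℱ.le t)]
    rfl
  have hF_summable : Summable fun t => ∫ ω, ‖X t ω * P[I t | ℱ t] ω‖ ∂P := by
    simp_rw [hF_integral]
    refine summable_of_sum_range_le (c := P.real Set.univ * C)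
      (fun t => integral_nonneg (hXI_nonneg t)) fun N => ?_
    rw [← integral_finsetSum _ fun t _ => hXI_int t]
    calc ∫ ω, ∑ t ∈ range N, X t ω * I t ω ∂P ≤ ∫ _, C ∂P :=
          integral_mono (integrable_finsetSum _ fun t _ => hXI_int t) (integrable_const C)
            (hsum N)
      _ = P.real Set.univ * C := by simp
  filter_upwards [ae_summable_norm_of_summable_integral_norm
    (fun t => (integrable_condExp.congr (hpull t))) hF_summable] with ω h
  exact h.of_norm

end Probability

theorem effective_step_sizes_general
    {Ω : Type*} {m : MeasurableSpace Ω} {P : Measure Ω} [IsProbabilityMeasure P]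
    (ℱ : Filtration ℕ m) (δ : ℝ) (hδ : δ ∈ Set.Ioc (0 : ℝ) 1)
    (q : ℕ → Ω → ℝ)
    (hq_bdd : ∀ t, ∀ᵐ ω ∂P, δ ≤ q t ω ∧ q t ω ≤ 1)
    (I : ℕ → Ω → ℝ)
    (hI01 : ∀ t ω, I t ω = 0 ∨ I t ω = 1)
    (hI_meas : ∀ t, StronglyMeasurable[ℱ (t + 1)] (I t))
    (hIq : ∀ t, P[I t | ℱ t] =ᵐ[P] q t)
    (n : ℕ → Ω → ℕ)
    (hn : ∀ t ω, (n t ω : ℝ) = ∑ τ ∈ Finset.range t, I τ ω)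
    (β : ℕ → ℝ)
    (hβ_div : ¬ Summable β)
    (hβ_sq : Summable (fun t => (β t) ^ 2)) :
    ∀ᵐ ω ∂P, ¬ Summable (fun t => q t ω * β (n t ω)) ∧
      Summable (fun t => (q t ω) ^ 2 * (β (n t ω)) ^ 2) := by
  have hI : ∀ t ω, I t ω ∈ Set.Icc (0 : ℝ) 1 := fun t ω => by
    rcases hI01 t ω with h | h <;> simp [h]
  have hn_meas : ∀ t, Measurable[ℱ t] (n t) := fun t => by
    refine (MeasurableEmbedding.natCast (α := ℝ)).measurable_comp_iff.1 ?_
    rw [show Nat.cast ∘ n t = fun ω => ∑ τ ∈ range t, I τ ω from funext (hn t)]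
    exact Finset.measurable_sum _ fun τ hτ =>
      ((hI_meas τ).mono (ℱ.mono (mem_range.1 hτ))).measurable
  have hq : ∀ᵐ ω ∂P, ∀ t, P[I t | ℱ t] ω = q t ω ∧ δ ≤ q t ω ∧ q t ω ≤ 1 :=
    ae_all_iff.2 fun t => (hIq t).and (hq_bdd t)
  have hvisits : ∀ᵐ ω ∂P, Tendsto (fun t => n t ω) atTop atTop := by
    filter_upwards [ae_tendsto_sum_atTop_of_le_condExp ℱ hδ.1 hI hI_meas fun t => by
      filter_upwards [hIq t, hq_bdd t] with ω hIqω hqω using hIqω ▸ hqω.1] with ω hω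
    exact tendsto_natCast_atTop_iff.1 (by simpa only [← hn] using hω)
  have hsq := ae_summable_mul_condExp_of_sum_le (P := P) ℱ (X := fun t ω => β (n t ω) ^ 2)
    (C := ∑' k, β k ^ 2) (fun t ω => (hI t ω).1)
    (fun t => .of_mem_Icc 0 1 ((hI_meas t).mono (ℱ.le _)).measurable.aemeasurable
      (.of_forall (hI t)))
    (fun t ω => sq_nonneg _)
    (fun t => ((measurable_from_nat (f := fun k => β k ^ 2)).comp (hn_meas t)).stronglyMeasurable)
    fun N ω => by
      rw [sum_range_comp_visits_mul (hI01 · ω) (hn · ω) (fun k => β k ^ 2)]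
      exact hβ_sq.sum_le_tsum _ fun k _ => sq_nonneg _
  filter_upwards [hvisits, hsq, hq] with ω hω_visits hω_sq hω_q
  refine ⟨not_summable_mul_of_le hδ.1 (fun t => (hω_q t).2.1) ?_, ?_⟩
  · exact not_summable_comp_of_surjective hβ_div <| Nat.surjective_of_tendsto_of_succ_le
      (visits_zero (hn · ω)) (visits_succ_le (hI01 · ω) (hn · ω)) hω_visits
  · refine hω_sq.of_nonneg_of_le (fun t => by positivity) fun t => ?_
    obtain ⟨hPq, hδq, hq1⟩ := hω_q t
    rw [hPq, mul_comm _ (q t ω)]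
    exact mul_le_mul_of_nonneg_right
      (pow_le_of_le_one (hδ.1.le.trans hδq) hq1 two_ne_zero) (sq_nonneg _)

/-- Effective step sizes: with visit indicators `I t` whose conditional probabilities
`q t ∈ [δ, 1]`, visit counters `n_t = ∑_{τ<t} I_τ`, and a step-size schedule `β` with
divergent sum, square-summable and eventually nonincreasing, almost surely
`∑_t q_t β(n_t) = ∞` and `∑_t q_t² β(n_t)² < ∞`. -/
theorem effective_step_sizes
    {Ω : Type*} {m : MeasurableSpace Ω} {P : Measure Ω} [IsProbabilityMeasure P]
    (ℱ : Filtration ℕ m) (δ : ℝ) (hδ : δ ∈ Set.Ioc (0 : ℝ) 1)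
    (q : ℕ → Ω → ℝ)
    (hq_meas : ∀ t, StronglyMeasurable[ℱ t] (q t))
    (hq_bdd : ∀ t, ∀ᵐ ω ∂P, δ ≤ q t ω ∧ q t ω ≤ 1)
    (I : ℕ → Ω → ℝ)
    (hI01 : ∀ t ω, I t ω = 0 ∨ I t ω = 1)
    (hI_meas : ∀ t, StronglyMeasurable[ℱ (t + 1)] (I t))
    (hIq : ∀ t, P[I t | ℱ t] =ᵐ[P] q t)
    (n : ℕ → Ω → ℕ)
    (hn : ∀ t ω, (n t ω : ℝ) = ∑ τ ∈ Finset.range t, I τ ω)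
    (β : ℕ → ℝ) (hβ_nonneg : ∀ t, 0 ≤ β t)
    (hβ_div : ¬ Summable β)
    (hβ_sq : Summable (fun t => (β t) ^ 2))
    (T : ℕ) (hβ_mono : ∀ s t : ℕ, T < s → s ≤ t → β t ≤ β s) :
    ∀ᵐ ω ∂P, ¬ Summable (fun t => q t ω * β (n t ω)) ∧
      Summable (fun t => (q t ω) ^ 2 * (β (n t ω)) ^ 2) :=
  effective_step_sizes_general ℱ δ hδ q hq_bdd I hI01 hI_meas hIq n hn β hβ_div hβ_sq
end

section
/- Adopt the visitation setup: (Ω, ℱ, P) a probability space with filtration (ℱ_t)_{t∈ℕ}, δ ∈ (0,1], for each t a random variable q_t that is ℱ_t-measurable with δ ≤ q_t ≤ 1 almost surely, and an indicator random variable I_t ∈ {0,1} that is ℱ_{t+1}-measurable with E[I_t | ℱ_t] = q_t almost surely; set n_t = ∑_{τ<t} I_τ. Then, almost surely, liminf_{t→∞} n_t/t ≥ δ; in particular, limsup_{t→∞} t/n_t ≤ 1/δ almost surely. -/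
/-!
The centred indicators `I t - q t` are bounded martingale differences. After dividing the `t`-th
one by `t + 1` their second moments are summable, so by orthogonality of martingale increments
the partial sums form an L²-bounded, hence a.s. convergent, martingale. Kronecker's lemma turns
this into `(∑_{τ<t} (I τ - q τ)) / t → 0` a.s.; as `q ≥ δ`, the visit frequency `n_t / t` is
eventually above `δ - ε` for every `ε > 0`, and `t / n_t = (n_t / t)⁻¹` is eventually below
`1 / δ + ε`.
-/

open MeasureTheory Filter Topology Finset

theorem Filter.Tendsto.kronecker {a : ℕ → ℝ} {s : ℝ}
    (h : Tendsto (fun t => ∑ k ∈ range t, a k / (k + 1)) atTop (𝓝 s)) :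
    Tendsto (fun t => (∑ k ∈ range t, a k) / t) atTop (𝓝 0) := by
  set S : ℕ → ℝ := fun t => ∑ k ∈ range t, a k / (k + 1)
  have abel : ∀ t : ℕ, ∑ k ∈ range t, a k = t * S t - ∑ k ∈ range t, S k := by
    intro t
    induction t with
    | zero => simp
    | succ t ih =>
      simp only [S, sum_range_succ] at ih ⊢
      rw [ih]
      field_simp
      push_cast
      ring
  have hdiff := h.sub h.cesaro
  rw [sub_self] at hdiff
  refine hdiff.congr' ?_
  filter_upwards [eventually_gt_atTop 0] with t ht
  rw [abel t]
  field_simp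

theorem le_liminf_sum_range_div {x y : ℕ → ℝ} {C δ : ℝ} (hx : ∀ k, x k ≤ C) (hy : ∀ k, δ ≤ y k)
    (h : Tendsto (fun t => (∑ k ∈ range t, (x k - y k)) / t) atTop (𝓝 0)) :
    δ ≤ liminf (fun t => (∑ k ∈ range t, x k) / t) atTop := by
  have hδ : Tendsto (fun t => (∑ k ∈ range t, (x k - y k)) / t + δ) atTop (𝓝 δ) := by
    simpa using h.add_const δ
  calc δ = liminf (fun t => (∑ k ∈ range t, (x k - y k)) / t + δ) atTop := hδ.liminf_eq.symm
    _ ≤ liminf (fun t => (∑ k ∈ range t, x k) / t) atTop := by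
      refine liminf_le_liminf ?_ hδ.isBoundedUnder_ge
        (isCoboundedUnder_ge_of_eventually_le atTop (x := C) ?_)
      all_goals filter_upwards [eventually_gt_atTop 0] with t ht
      · have : δ ≤ (∑ k ∈ range t, y k) / t := by
          rw [le_div_iff₀ (by positivity)]
          simpa [mul_comm] using sum_le_sum (s := range t) fun k _ => hy k
        rw [sum_sub_distrib, sub_div]
        linarith
      · rw [div_le_iff₀ (by positivity)]
        simpa [mul_comm] using sum_le_sum (s := range t) fun k _ => hx k

theorem limsup_inv_le_inv_of_le_liminf {α : Type*} {l : Filter α} [l.NeBot] {u : α → ℝ} {δ : ℝ}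
    (hu : ∀ a, 0 ≤ u a) (hδ : 0 < δ) (h : δ ≤ liminf u l) :
    limsup (fun a => (u a)⁻¹) l ≤ δ⁻¹ := by
  refine le_of_forall_gt_imp_ge_of_dense fun b hb => ?_
  have hb0 : 0 < b := (inv_pos.2 hδ).trans hb
  have hlt : b⁻¹ < liminf u l := (inv_lt_of_inv_lt₀ hδ hb).trans_le h
  refine limsup_le_of_le (isCoboundedUnder_le_of_le l fun a => inv_nonneg.2 (hu a)) ?_
  filter_upwards [eventually_lt_of_lt_liminf hlt (isBoundedUnder_of ⟨0, hu⟩)] with a ha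
  exact (inv_le_comm₀ ((inv_pos.2 hb0).trans ha) hb0).2 ha.le

section MartingaleDifferences

variable {Ω : Type*} {m : MeasurableSpace Ω} {P : Measure Ω} [IsFiniteMeasure P]

theorem integral_mul_eq_zero_of_condExp_eq_zero {m' : MeasurableSpace Ω} (hm : m' ≤ m)
    {g d : Ω → ℝ} (hg : StronglyMeasurable[m'] g) (hgd : Integrable (g * d) P)
    (hd : Integrable d P) (hce : P[d|m'] =ᵐ[P] 0) : ∫ ω, (g * d) ω ∂P = 0 := by
  calc ∫ ω, (g * d) ω ∂P = ∫ ω, P[g * d|m'] ω ∂P := (integral_condExp hm).symm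
    _ = ∫ ω, (0 : Ω → ℝ) ω ∂P := by
      refine integral_congr_ae ?_
      filter_upwards [condExp_mul_of_stronglyMeasurable_left hg hgd hd, hce] with ω h₁ h₂
      simp [h₁, h₂]
    _ = 0 := integral_zero _ _

theorem condExp_sub_eq_zero_of_condExp_eq {m' : MeasurableSpace Ω} (hm : m' ≤ m) {X Y : Ω → ℝ}
    (hX : Integrable X P) (hY : StronglyMeasurable[m'] Y) (hYi : Integrable Y P)
    (h : P[X|m'] =ᵐ[P] Y) : P[X - Y|m'] =ᵐ[P] 0 := by
  filter_upwards [condExp_sub hX hYi m', h] with ω h₁ h₂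
  simp [h₁, h₂, condExp_of_stronglyMeasurable hm hY hYi]

variable {ℱ : Filtration ℕ m} {d : ℕ → Ω → ℝ}

theorem martingale_sum_range_of_condExp_eq_zero
    (hmeas : ∀ t, StronglyMeasurable[ℱ (t + 1)] (d t)) (hint : ∀ t, Integrable (d t) P)
    (hce : ∀ t, P[d t|ℱ t] =ᵐ[P] 0) :
    Martingale (fun t ω => ∑ τ ∈ range t, d τ ω) ℱ P := by
  have hadapted : StronglyAdapted ℱ fun t ω => ∑ τ ∈ range t, d τ ω := fun t =>
    Finset.stronglyMeasurable_fun_sum _ fun τ hτ => (hmeas τ).mono (ℱ.mono (mem_range.1 hτ))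
  have hsum_int : ∀ t, Integrable (fun ω => ∑ τ ∈ range t, d τ ω) P := fun t =>
    integrable_finsetSum _ fun τ _ => hint τ
  refine martingale_nat hadapted hsum_int fun t => ?_
  have hstep : (fun ω => ∑ τ ∈ range (t + 1), d τ ω)
      = (fun ω => ∑ τ ∈ range t, d τ ω) + d t := by
    ext ω
    simp [sum_range_succ]
  show _ =ᵐ[P] P[fun ω => ∑ τ ∈ range (t + 1), d τ ω|ℱ t]
  filter_upwards [condExp_add (m := ℱ t) (hsum_int t) (hint t), hce t] with ω h₁ h₂
  rw [hstep, h₁, Pi.add_apply, h₂,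
    condExp_of_stronglyMeasurable (ℱ.le t) (hadapted t) (hsum_int t)]
  simp

theorem integral_sum_range_sq_of_condExp_eq_zero
    (hmeas : ∀ t, StronglyMeasurable[ℱ (t + 1)] (d t)) (hL2 : ∀ t, MemLp (d t) 2 P)
    (hce : ∀ t, P[d t|ℱ t] =ᵐ[P] 0) (t : ℕ) :
    ∫ ω, (∑ τ ∈ range t, d τ ω) ^ 2 ∂P = ∑ τ ∈ range t, ∫ ω, d τ ω ^ 2 ∂P := by
  induction t with
  | zero => simp
  | succ t ih =>
    set S : Ω → ℝ := fun ω => ∑ τ ∈ range t, d τ ω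
    have hS : MemLp S 2 P := memLp_finsetSum _ fun τ _ => hL2 τ
    have hS_meas : StronglyMeasurable[ℱ t] S :=
      Finset.stronglyMeasurable_fun_sum _ fun τ hτ => (hmeas τ).mono (ℱ.mono (mem_range.1 hτ))
    have hSd : Integrable (S * d t) P := hS.integrable_mul (hL2 t)
    have horth : ∫ ω, (S * d t) ω ∂P = 0 :=
      integral_mul_eq_zero_of_condExp_eq_zero (ℱ.le t) hS_meas hSd
        ((hL2 t).integrable one_le_two) (hce t)
    have hexpand : (fun ω => (∑ τ ∈ range (t + 1), d τ ω) ^ 2)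
        = fun ω => S ω ^ 2 + 2 * (S * d t) ω + d t ω ^ 2 := by
      ext ω
      simp only [sum_range_succ, Pi.mul_apply, S]
      ring
    have hS2 : Integrable (fun ω => S ω ^ 2) P := hS.integrable_sq
    have hSd2 : Integrable (fun ω => 2 * (S * d t) ω) P := hSd.const_mul 2
    have hS2Sd2 : Integrable (fun ω => S ω ^ 2 + 2 * (S * d t) ω) P := hS2.add hSd2
    rw [hexpand, integral_add hS2Sd2 (hL2 t).integrable_sq, integral_add hS2 hSd2,
      integral_const_mul, horth, ih, sum_range_succ]
    ring

theorem Martingale.ae_exists_tendsto_of_integral_sq_le {f : ℕ → Ω → ℝ} (hf : Martingale f ℱ P)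
    (hL2 : ∀ t, MemLp (f t) 2 P) {R : ℝ} (hR : ∀ t, ∫ ω, f t ω ^ 2 ∂P ≤ R) :
    ∀ᵐ ω ∂P, ∃ c, Tendsto (fun t => f t ω) atTop (𝓝 c) := by
  have hL1 : ∀ t, eLpNorm (f t) 1 P ≤ (((R + P.real Set.univ) / 2).toNNReal : ENNReal) := by
    intro t
    have hint := (hL2 t).integrable one_le_two
    have hbound : ∫ ω, ‖f t ω‖ ∂P ≤ (R + P.real Set.univ) / 2 := by
      calc ∫ ω, ‖f t ω‖ ∂P ≤ ∫ ω, (f t ω ^ 2 + 1) / 2 ∂P := by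
            refine integral_mono hint.norm
              (((hL2 t).integrable_sq.add (integrable_const 1)).div_const 2) fun ω => ?_
            nlinarith [sq_nonneg (|f t ω| - 1), sq_abs (f t ω), Real.norm_eq_abs (f t ω)]
        _ = (∫ ω, f t ω ^ 2 ∂P + P.real Set.univ) / 2 := by
            rw [integral_div, integral_add (hL2 t).integrable_sq (integrable_const 1)]
            simp
        _ ≤ (R + P.real Set.univ) / 2 := by linarith [hR t]
    rw [eLpNorm_one_eq_lintegral_enorm, ← ofReal_integral_norm_eq_lintegral_enorm hint,
      ENNReal.ofNNReal_toNNReal]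
    exact ENNReal.ofReal_le_ofReal hbound
  exact hf.submartingale.exists_ae_tendsto_of_bdd hL1

theorem ae_exists_tendsto_sum_range_of_condExp_eq_zero
    (hmeas : ∀ t, StronglyMeasurable[ℱ (t + 1)] (d t)) (hL2 : ∀ t, MemLp (d t) 2 P)
    (hce : ∀ t, P[d t|ℱ t] =ᵐ[P] 0) (hsum : Summable fun t => ∫ ω, d t ω ^ 2 ∂P) :
    ∀ᵐ ω ∂P, ∃ c, Tendsto (fun t => ∑ τ ∈ range t, d τ ω) atTop (𝓝 c) := by
  refine Martingale.ae_exists_tendsto_of_integral_sq_le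
    (martingale_sum_range_of_condExp_eq_zero hmeas (fun t => (hL2 t).integrable one_le_two) hce)
    (fun t => memLp_finsetSum _ fun τ _ => hL2 τ)
    (R := ∑' t, ∫ ω, d t ω ^ 2 ∂P) fun t => ?_
  rw [integral_sum_range_sq_of_condExp_eq_zero hmeas hL2 hce]
  exact hsum.sum_le_tsum _ fun τ _ => integral_nonneg fun ω => sq_nonneg _

theorem ae_tendsto_sum_range_div_of_condExp_eq_zero {D : ℕ → Ω → ℝ}
    (hmeas : ∀ t, StronglyMeasurable[ℱ (t + 1)] (D t)) (hce : ∀ t, P[D t|ℱ t] =ᵐ[P] 0)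
    {C : ℝ} (hbdd : ∀ t, ∀ᵐ ω ∂P, |D t ω| ≤ C) :
    ∀ᵐ ω ∂P, Tendsto (fun t => (∑ τ ∈ range t, D τ ω) / t) atTop (𝓝 0) := by
  set d : ℕ → Ω → ℝ := fun t ω => D t ω / (t + 1)
  have hd_eq : ∀ t, d t = ((t : ℝ) + 1)⁻¹ • D t := fun t => by
    ext ω
    simp [d, div_eq_inv_mul]
  have hd_meas : ∀ t, StronglyMeasurable[ℱ (t + 1)] (d t) := fun t =>
    hd_eq t ▸ (hmeas t).const_smul _
  have hd_abs : ∀ t, ∀ᵐ ω ∂P, |d t ω| ≤ C / (t + 1) := fun t => by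
    filter_upwards [hbdd t] with ω hω
    rw [abs_div, abs_of_pos (a := (t : ℝ) + 1) (Nat.cast_add_one_pos t)]
    gcongr
  have hd_L2 : ∀ t, MemLp (d t) 2 P := fun t =>
    MemLp.of_bound ((hd_meas t).mono (ℱ.le _)).aestronglyMeasurable _ (hd_abs t)
  have hd_ce : ∀ t, P[d t|ℱ t] =ᵐ[P] 0 := fun t => by
    filter_upwards [hd_eq t ▸ condExp_smul (m := ℱ t) (μ := P) ((t : ℝ) + 1)⁻¹ (D t), hce t]
      with ω h₁ h₂
    simp [h₁, h₂]
  have hsum : Summable fun t => ∫ ω, d t ω ^ 2 ∂P := by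
    have hp : Summable fun t : ℕ => (C / ((t : ℝ) + 1)) ^ 2 := by
      refine (((summable_nat_add_iff 1).2 (Real.summable_nat_pow_inv.2 one_lt_two)).mul_left
        (C ^ 2)).congr fun t => ?_
      push_cast
      rw [div_pow, div_eq_mul_inv]
    refine Summable.of_nonneg_of_le (fun t => integral_nonneg fun ω => sq_nonneg _)
      (fun t => ?_) (hp.mul_left (P.real Set.univ))
    have hd_sq : ∀ᵐ ω ∂P, d t ω ^ 2 ≤ (C / ((t : ℝ) + 1)) ^ 2 := by
      filter_upwards [hd_abs t] with ω hω
      simpa only [sq_abs] using pow_le_pow_left₀ (abs_nonneg _) hω 2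
    simpa using integral_mono_ae (hd_L2 t).integrable_sq (integrable_const _) hd_sq
  filter_upwards [ae_exists_tendsto_sum_range_of_condExp_eq_zero hd_meas hd_L2 hd_ce hsum]
    with ω ⟨_, hc⟩
  exact hc.kronecker

end MartingaleDifferences

/-- With visit indicators `I t`, conditional visit probabilities `q t ∈ [δ,1]` and visit
counters `n_t = ∑_{τ<t} I_τ`, almost surely `liminf n_t/t ≥ δ`; in particular
`limsup t/n_t ≤ 1/δ` almost surely. -/
theorem visit_fraction_liminf
    {Ω : Type*} {m : MeasurableSpace Ω} {P : Measure Ω} [IsProbabilityMeasure P]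
    (ℱ : Filtration ℕ m) (δ : ℝ) (hδ : δ ∈ Set.Ioc (0 : ℝ) 1)
    (q : ℕ → Ω → ℝ)
    (hq_meas : ∀ t, StronglyMeasurable[ℱ t] (q t))
    (hq_bdd : ∀ t, ∀ᵐ ω ∂P, δ ≤ q t ω ∧ q t ω ≤ 1)
    (I : ℕ → Ω → ℝ)
    (hI01 : ∀ t ω, I t ω = 0 ∨ I t ω = 1)
    (hI_meas : ∀ t, StronglyMeasurable[ℱ (t + 1)] (I t))
    (hIq : ∀ t, P[I t | ℱ t] =ᵐ[P] q t)
    (n : ℕ → Ω → ℕ)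
    (hn : ∀ t ω, (n t ω : ℝ) = ∑ τ ∈ Finset.range t, I τ ω) :
    ∀ᵐ ω ∂P,
      δ ≤ Filter.liminf (fun t : ℕ => (n t ω : ℝ) / t) atTop ∧
      Filter.limsup (fun t : ℕ => (t : ℝ) / (n t ω : ℝ)) atTop ≤ 1 / δ := by
  obtain ⟨hδ0, -⟩ := hδ
  have hI_abs : ∀ t ω, |I t ω| ≤ 1 := fun t ω => by rcases hI01 t ω with h | h <;> simp [h]
  have hI_int : ∀ t, Integrable (I t) P := fun t =>
    .of_bound ((hI_meas t).mono (ℱ.le _)).aestronglyMeasurable 1 (ae_of_all _ (hI_abs t))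
  have hq_int : ∀ t, Integrable (q t) P := fun t => by
    refine .of_bound ((hq_meas t).mono (ℱ.le _)).aestronglyMeasurable 1 ?_
    filter_upwards [hq_bdd t] with ω ⟨h₁, h₂⟩
    exact abs_le.2 ⟨by linarith, h₂⟩
  have hD_abs : ∀ t, ∀ᵐ ω ∂P, |I t ω - q t ω| ≤ 1 := fun t => by
    filter_upwards [hq_bdd t] with ω ⟨h₁, h₂⟩
    rcases hI01 t ω with h | h <;> rw [h, abs_le] <;> constructor <;> linarith
  have hD := ae_tendsto_sum_range_div_of_condExp_eq_zero (D := fun t => I t - q t)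
    (fun t => (hI_meas t).sub ((hq_meas t).mono (ℱ.mono t.le_succ)))
    (fun t => condExp_sub_eq_zero_of_condExp_eq (ℱ.le t) (hI_int t) (hq_meas t) (hq_int t)
      (hIq t))
    hD_abs
  filter_upwards [hD, ae_all_iff.2 hq_bdd] with ω hDω hqω
  have hlim : δ ≤ liminf (fun t : ℕ => (n t ω : ℝ) / t) atTop := by
    simp only [hn]
    exact le_liminf_sum_range_div (fun k => (abs_le.1 (hI_abs k ω)).2) (fun k => (hqω k).1) hDω
  refine ⟨hlim, ?_⟩
  simpa only [one_div, inv_div] using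
    limsup_inv_le_inv_of_le_liminf (fun t => by positivity) hδ0 hlim
end

section
/- Let β : ℕ → [0, ∞) and suppose there exist T ∈ ℕ and δ ∈ (0,1] such that β is nonincreasing on {t : t > T} and ∑_{t=0}^∞ β(t)² < ∞. Let n : ℕ → ℕ be any function with liminf_{t→∞} n(t)/t ≥ δ. Then ∑_{t=0}^∞ β(n(t))² < ∞. -/
open Filter Topology Finset

lemma sum_range_mul_div (f : ℕ → ℝ) (K : ℕ) (hK : 0 < K) (N : ℕ) :
    ∑ t ∈ range (N * K), f (t / K) = K * ∑ i ∈ range N, f i := by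
  induction N with
  | zero => simp
  | succ N ih =>
    have h1 : (N + 1) * K = N * K + K := by ring
    rw [h1, Finset.sum_range_add, ih]
    have h2 : ∀ i ∈ range K, f ((N * K + i) / K) = f N := by
      intro i hi
      simp only [Finset.mem_range] at hi
      congr 1
      rw [Nat.add_comm, Nat.add_mul_div_right _ _ hK, Nat.div_eq_of_lt hi, Nat.zero_add]
    rw [Finset.sum_congr rfl h2, Finset.sum_const, Finset.card_range,
      Finset.sum_range_succ, nsmul_eq_mul]
    ring

/-- If `β : ℕ → [0,∞)` is eventually nonincreasing and square-summable, and `n : ℕ → ℕ`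
satisfies `liminf n(t)/t ≥ δ` for some `δ ∈ (0,1]`, then `∑_t β(n(t))² < ∞`. -/
theorem sq_summable_beta_comp_of_liminf
    (β : ℕ → ℝ) (hβ_nonneg : ∀ t, 0 ≤ β t)
    (T : ℕ) (δ : ℝ) (hδ : δ ∈ Set.Ioc (0 : ℝ) 1)
    (hβ_mono : ∀ s t : ℕ, T < s → s ≤ t → β t ≤ β s)
    (hβ_sq : Summable (fun t => (β t) ^ 2))
    (n : ℕ → ℕ)
    (hliminf : δ ≤ Filter.liminf (fun t : ℕ => (n t : ℝ) / t) atTop) :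
    Summable (fun t => (β (n t)) ^ 2) := by
  obtain ⟨hδ0, hδ1⟩ := hδ
  set u : ℕ → ℝ := fun t => (n t : ℝ) / t with hu
  have hbound : IsBoundedUnder (· ≥ ·) atTop u :=
    isBoundedUnder_of ⟨0, fun t => by positivity⟩
  have hev : ∀ᶠ t in atTop, δ / 2 < u t :=
    eventually_lt_of_lt_liminf (lt_of_lt_of_le (by linarith) hliminf) hbound
  obtain ⟨t₀, ht₀⟩ := hev.exists_forall_of_atTop
  -- choose K
  set K : ℕ := ⌈2 / δ⌉₊ with hKdef
  have hKpos : 0 < K := Nat.ceil_pos.mpr (by positivity)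
  have hKge : 2 / δ ≤ (K : ℝ) := Nat.le_ceil _
  have hKinv : 1 / (K : ℝ) ≤ δ / 2 := by
    rw [div_le_div_iff₀ (by positivity) (by norm_num)]
    have : 2 / δ * δ ≤ (K : ℝ) * δ := by
      apply mul_le_mul_of_nonneg_right hKge (le_of_lt hδ0)
    rw [div_mul_cancel₀] at this
    · linarith
    · exact ne_of_gt hδ0
  set t₁ : ℕ := max (max t₀ 1) (K * (T + 1)) with ht₁
  -- key pointwise bound for t ≥ t₁
  have hkey : ∀ t, t₁ ≤ t → β (n t) ^ 2 ≤ β (t / K) ^ 2 := by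
    intro t ht
    have ht0 : t₀ ≤ t := le_trans (le_trans (le_max_left _ _) (le_max_left _ _)) ht
    have ht1 : 1 ≤ t := le_trans (le_trans (le_max_right _ _) (le_max_left _ _)) ht
    have htK : K * (T + 1) ≤ t := le_trans (le_max_right _ _) ht
    have htpos : (0 : ℝ) < t := by exact_mod_cast ht1
    have hnt : (t : ℝ) * (δ / 2) < n t := by
      have := ht₀ t ht0
      rw [hu, lt_div_iff₀ htpos] at this
      linarith [this]
    -- T < t / K
    have hTlt : T < t / K := by
      have : T + 1 ≤ t / K := (Nat.le_div_iff_mul_le hKpos).mpr (by linarith [htK])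
      omega
    -- t / K ≤ n t
    have hdiv : t / K ≤ n t := by
      have h1 : ((t / K : ℕ) : ℝ) ≤ (t : ℝ) / K := Nat.cast_div_le
      have h2 : (t : ℝ) / K = (t : ℝ) * (1 / K) := by ring
      have h3 : (t : ℝ) * (1 / K) ≤ (t : ℝ) * (δ / 2) :=
        mul_le_mul_of_nonneg_left hKinv (le_of_lt htpos)
      have : ((t / K : ℕ) : ℝ) < (n t : ℝ) := by
        calc ((t / K : ℕ) : ℝ) ≤ (t : ℝ) / K := h1
        _ = (t : ℝ) * (1 / K) := h2
        _ ≤ (t : ℝ) * (δ / 2) := h3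
        _ < n t := hnt
      exact le_of_lt (by exact_mod_cast this)
    have := hβ_mono (t / K) (n t) hTlt hdiv
    exact pow_le_pow_left₀ (hβ_nonneg _) this 2
  -- summability of t ↦ β(t/K)^2
  have hg : Summable (fun t => β (t / K) ^ 2) := by
    apply summable_of_sum_range_le (c := (K : ℝ) * ∑' i, β i ^ 2)
      (fun t => by positivity)
    intro N
    have hsub : ∑ t ∈ range N, β (t / K) ^ 2 ≤ ∑ t ∈ range (N * K), β (t / K) ^ 2 := by
      apply Finset.sum_le_sum_of_subset_of_nonneg
      · exact Finset.range_subset_range.mpr (Nat.le_mul_of_pos_right _ hKpos)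
      · intro i _ _; positivity
    rw [sum_range_mul_div (fun i => β i ^ 2) K hKpos N] at hsub
    calc ∑ t ∈ range N, β (t / K) ^ 2 ≤ (K : ℝ) * ∑ i ∈ range N, β i ^ 2 := hsub
    _ ≤ (K : ℝ) * ∑' i, β i ^ 2 := by
        apply mul_le_mul_of_nonneg_left _ (Nat.cast_nonneg K)
        exact Summable.sum_le_tsum _ (fun i _ => by positivity) hβ_sq
  clear_value u K t₁
  -- conclude via tail comparison
  rw [← summable_nat_add_iff t₁]
  apply Summable.of_nonneg_of_le (fun t => by positivity)
    (fun t => hkey (t + t₁) (Nat.le_add_left _ _))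
  exact (summable_nat_add_iff t₁).mpr hg
end
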